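/- arXiv:2211.12795 — 3 statements merged into one kernel-verified Lean document; each statement's English description precedes it below -/
import Mathlib

section
/- Let Γ be an infinite cardinal and 𝒜 ⊆ [Γ]^Γ an almost disjoint family of cardinality greater than Γ. Suppose T : Y_𝒜 → ℓ_∞(Γ) is a bounded linear operator whose kernel contains Z_𝒜. Then 𝒜 contains a subfamily 𝒜' with |𝒜'| = |𝒜| such that Y_{𝒜'} ⊆ ker T. -/
open Cardinal Set

noncomputable def ind {Γ : Type*} (A : Set Γ) : lp (fun _ : Γ => ℝ) ⊤ :=
  ⟨A.indicator 1, memℓp_infty ⟨1, by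
    rintro r ⟨γ, rfl⟩
    by_cases h : γ ∈ A <;> simp [Set.indicator_apply, h]⟩⟩

def AlmostDisjoint {Γ : Type*} (𝒜 : Set (Set Γ)) : Prop :=
  (∀ A ∈ 𝒜, #A = #Γ) ∧ ∀ A ∈ 𝒜, ∀ B ∈ 𝒜, A ≠ B → #(↥(A ∩ B)) < #Γ

noncomputable def Ysub {Γ : Type*} (𝒜 : Set (Set Γ)) : Submodule ℝ (lp (fun _ : Γ => ℝ) ⊤) :=
  (Submodule.span ℝ
    {y | ∃ (n : ℕ) (A : Fin (n + 1) → Set Γ), (∀ i, A i ∈ 𝒜) ∧ y = ind (⋂ i, A i)}).topologicalClosure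

def Zgen {Γ : Type*} (𝒜 : Set (Set Γ)) : Set (lp (fun _ : Γ => ℝ) ⊤) :=
  {y | ∃ (n : ℕ) (A : Fin (n + 2) → Set Γ),
    (∀ i, A i ∈ 𝒜) ∧ Function.Injective A ∧ y = ind (⋂ i, A i)}

noncomputable def Zsub {Γ : Type*} (𝒜 : Set (Set Γ)) : Submodule ℝ (lp (fun _ : Γ => ℝ) ⊤) :=
  (Submodule.span ℝ (Zgen 𝒜)).topologicalClosure

/-!
Since `T` kills the indicator of every intersection of at least two distinct members of `𝒜`,
inclusion–exclusion gives `T 1_{A₁ ∪ ⋯ ∪ Aₙ} = ∑ T 1_{Aᵢ}` for distinct `Aᵢ ∈ 𝒜`; hence every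
finite sum of the family `A ↦ T 1_A` has norm at most `‖T‖`. In each coordinate `γ` a real family
with bounded finite sums has countable support, so `T 1_A ≠ 0` for at most `#Γ` members `A`.
Discarding them leaves `#𝒜` sets, and every generator of `Y` for what is left is either some
`1_A` with `T 1_A = 0` or an element of `Z_𝒜`.
-/

open Function

lemma countable_support_of_abs_sum_le {ι : Type*} (x : ι → ℝ) (C : ℝ)
    (h : ∀ s : Finset ι, |∑ i ∈ s, x i| ≤ C) : (support x).Countable := by
  classical
  have habs : ∀ s : Finset ι, ∑ i ∈ s, |x i| ≤ C + C := by
    intro s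
    rw [← Finset.sum_filter_add_sum_filter_not s (fun i => 0 ≤ x i)]
    have hpos : ∑ i ∈ s with 0 ≤ x i, |x i| = ∑ i ∈ s with 0 ≤ x i, x i :=
      Finset.sum_congr rfl fun i hi => abs_of_nonneg (Finset.mem_filter.1 hi).2
    have hneg : ∑ i ∈ s with ¬0 ≤ x i, |x i| = -∑ i ∈ s with ¬0 ≤ x i, x i := by
      rw [← Finset.sum_neg_distrib]
      exact Finset.sum_congr rfl fun i hi => abs_of_neg (not_le.1 (Finset.mem_filter.1 hi).2)
    rw [hpos, hneg]
    exact add_le_add ((le_abs_self _).trans (h _)) ((neg_le_abs _).trans (h _))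
  convert (summable_of_sum_le (f := |x|) (fun i => abs_nonneg (x i)) habs).countable_support
    using 1
  ext i
  simp

universe u in
lemma mk_support_le_of_norm_sum_le {ι Γ : Type u} [Infinite Γ] {p : ENNReal} (hp : p ≠ 0)
    (f : ι → lp (fun _ : Γ => ℝ) p) (C : ℝ) (h : ∀ s : Finset ι, ‖∑ i ∈ s, f i‖ ≤ C) :
    #(support f) ≤ #Γ := by
  have hcover : support f ⊆ ⋃ γ, support fun i => f i γ := by
    intro i hi
    by_contra hnot
    simp only [mem_iUnion, mem_support, not_exists, not_not] at hnot
    exact hi (lp.ext (funext hnot))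
  have hcount (γ : Γ) : (support fun i => f i γ).Countable := by
    refine countable_support_of_abs_sum_le _ C fun s => ?_
    have := (lp.norm_apply_le_norm hp (∑ i ∈ s, f i) γ).trans (h s)
    rwa [lp.coeFn_sum, Finset.sum_apply, Real.norm_eq_abs] at this
  calc #(support f) ≤ #(⋃ γ, support fun i => f i γ) := mk_le_mk_of_subset hcover
    _ ≤ #Γ * ⨆ γ, #(support fun i => f i γ) := mk_iUnion_le _
    _ ≤ #Γ * ℵ₀ := by gcongr; exact ciSup_le' fun γ => (hcount γ).le_aleph0
    _ = #Γ := mul_aleph0_eq (aleph0_le_mk Γ)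

lemma map_eq_zero_of_mem_topologicalClosure_span {R E F : Type*} [Semiring R]
    [AddCommMonoid E] [Module R E] [TopologicalSpace E] [ContinuousAdd E] [ContinuousConstSMul R E]
    [AddCommMonoid F] [Module R F] [TopologicalSpace F] [T1Space F]
    {Y : Submodule R E} (hY : IsClosed (Y : Set E)) (T : Y →L[R] F) {V : Set E} (hVY : V ⊆ Y)
    (hV : ∀ x : Y, (x : E) ∈ V → T x = 0) {x : Y}
    (hx : (x : E) ∈ (Submodule.span R V).topologicalClosure) : T x = 0 := by
  set K := (LinearMap.ker (T : Y →ₗ[R] F)).map Y.subtype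
  have hK : IsClosed (K : Set E) := by
    rw [Submodule.map_coe]
    exact hY.isClosedEmbedding_subtypeVal.isClosedMap _ T.isClosed_ker
  have hVK : V ⊆ K := fun v hv => ⟨⟨v, hVY hv⟩, hV _ hv, rfl⟩
  obtain ⟨y, hy, hyx⟩ := Submodule.topologicalClosure_minimal _ (Submodule.span_le.2 hVK) hK hx
  rwa [← Subtype.ext hyx]

section Indicators

variable {Γ : Type*}

lemma coe_ind (A : Set Γ) : ⇑(ind A) = A.indicator 1 := rfl

lemma norm_ind_le (A : Set Γ) : ‖ind A‖ ≤ 1 := by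
  refine lp.norm_le_of_forall_le zero_le_one fun γ => ?_
  by_cases h : γ ∈ A <;> simp [coe_ind, h]

lemma ind_biUnion_eq_sum_powerset {ι : Type*} (s : Finset ι) (S : ι → Set Γ) :
    ind (⋃ i ∈ s, S i) =
      ∑ t ∈ s.powerset with t.Nonempty, (-1 : ℤ) ^ (t.card + 1) • ind (⋂ i ∈ t, S i) := by
  ext γ
  rw [lp.coeFn_sum, Finset.sum_apply]
  exact Finset.indicator_biUnion_eq_sum_powerset s S (1 : Γ → ℝ) γ

end Indicators

section Generators

variable {Γ : Type*} {𝒜 𝒜' : Set (Set Γ)}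

def Ygen (𝒜 : Set (Set Γ)) : Set (lp (fun _ : Γ => ℝ) ⊤) :=
  {y | ∃ (n : ℕ) (A : Fin (n + 1) → Set Γ), (∀ i, A i ∈ 𝒜) ∧ y = ind (⋂ i, A i)}

lemma Ygen_mono (h : 𝒜' ⊆ 𝒜) : Ygen 𝒜' ⊆ Ygen 𝒜 := by
  rintro y ⟨n, A, hA, rfl⟩
  exact ⟨n, A, fun i => h (hA i), rfl⟩

lemma Ygen_subset_Ysub : Ygen 𝒜 ⊆ Ysub 𝒜 :=
  Submodule.subset_span.trans (Submodule.le_topologicalClosure _)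

lemma ind_mem_Ysub {A : Set Γ} (hA : A ∈ 𝒜) : ind A ∈ Ysub 𝒜 :=
  Ygen_subset_Ysub ⟨0, fun _ => A, fun _ => hA, by rw [iInter_const]⟩

lemma Zgen_subset_Ygen : Zgen 𝒜 ⊆ Ygen 𝒜 := by
  rintro y ⟨n, A, hA, -, rfl⟩
  exact ⟨n + 1, A, hA, rfl⟩

lemma Zsub_le_Ysub : Zsub 𝒜 ≤ Ysub 𝒜 :=
  Submodule.topologicalClosure_mono (Submodule.span_mono Zgen_subset_Ygen)

lemma ind_biInter_mem_Zgen {t : Finset 𝒜} (ht : 2 ≤ t.card) :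
    ind (⋂ A ∈ t, (A : Set Γ)) ∈ Zgen 𝒜 := by
  obtain ⟨n, hn⟩ : ∃ n, t.card = n + 2 := ⟨t.card - 2, by omega⟩
  let e : Fin (n + 2) ≃ t := (finCongr hn.symm).trans t.equivFin.symm
  refine ⟨n, fun k => e k, fun k => (e k : 𝒜).2,
    Subtype.val_injective.comp (Subtype.val_injective.comp e.injective), ?_⟩
  congr 1
  ext γ
  simp only [mem_iInter]
  exact Subtype.forall.symm.trans
    (e.symm.forall_congr_left (p := fun A : t => γ ∈ ((A : 𝒜) : Set Γ)))

lemma iInter_eq_or_ind_iInter_mem_Zgen {n : ℕ} {A : Fin (n + 1) → Set Γ}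
    (hA : ∀ i, A i ∈ 𝒜) : (⋂ i, A i) = A 0 ∨ ind (⋂ i, A i) ∈ Zgen 𝒜 := by
  classical
  by_cases hconst : ∀ i, A i = A 0
  · left
    simp [hconst, iInter_const]
  · right
    obtain ⟨i, hi⟩ := not_forall.1 hconst
    let u : Finset 𝒜 := Finset.univ.image fun j => ⟨A j, hA j⟩
    have hu : 2 ≤ u.card := Finset.one_lt_card.2
      ⟨⟨A i, hA i⟩, Finset.mem_image_of_mem _ (Finset.mem_univ _),
        ⟨A 0, hA 0⟩, Finset.mem_image_of_mem _ (Finset.mem_univ _), by simpa using hi⟩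
    simpa [u, Finset.set_biInter_finset_image] using ind_biInter_mem_Zgen hu

lemma ind_biUnion_sub_sum_mem_span_Zgen (s : Finset 𝒜) :
    ind (⋃ A ∈ s, (A : Set Γ)) - ∑ A ∈ s, ind (A : Set Γ) ∈ Submodule.span ℝ (Zgen 𝒜) := by
  classical
  rw [ind_biUnion_eq_sum_powerset, ← Finset.sum_filter_add_sum_filter_not _ (·.card = 1)]
  have hsingletons :
      (s.powerset.filter Finset.Nonempty).filter (·.card = 1) = s.powersetCard 1 := by
    ext t
    simp only [Finset.mem_filter, Finset.mem_powerset, Finset.mem_powersetCard]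
    constructor
    · exact fun h => ⟨h.1.1, h.2⟩
    · exact fun h => ⟨⟨h.1, Finset.card_pos.1 (by omega)⟩, h.2⟩
  rw [hsingletons, Finset.powersetCard_one, Finset.sum_map]
  simp only [Embedding.coeFn_mk, Finset.card_singleton, Finset.mem_singleton,
    iInter_iInter_eq_left]
  rw [show (-1 : ℤ) ^ (1 + 1) = 1 by norm_num]
  simp only [one_smul, add_sub_cancel_left]
  refine Submodule.sum_mem _ fun t ht =>
    zsmul_mem (Submodule.subset_span (ind_biInter_mem_Zgen ?_)) _
  simp only [Finset.mem_filter] at ht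
  have := Finset.card_pos.2 ht.1.2
  omega

variable {F : Type*} [NormedAddCommGroup F] [NormedSpace ℝ F] (T : Ysub 𝒜 →L[ℝ] F)

lemma norm_sum_apply_ind_le
    (hker : ∀ x : Ysub 𝒜, (x : lp (fun _ : Γ => ℝ) ⊤) ∈ Zsub 𝒜 → T x = 0) (s : Finset 𝒜) :
    ‖∑ A ∈ s, T ⟨ind A, ind_mem_Ysub A.2⟩‖ ≤ ‖T‖ := by
  set u : Ysub 𝒜 := ∑ A ∈ s, ⟨ind A, ind_mem_Ysub A.2⟩
  have hzZ : ind (⋃ A ∈ s, (A : Set Γ)) - u ∈ Zsub 𝒜 := by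
    rw [Submodule.coe_sum]
    exact Submodule.le_topologicalClosure _ (ind_biUnion_sub_sum_mem_span_Zgen s)
  set z : Ysub 𝒜 := ⟨_, Zsub_le_Ysub hzZ⟩
  have hTu : T u = T (u + z) := by rw [map_add, hker z hzZ, add_zero]
  rw [← map_sum, hTu]
  refine T.unit_le_opNorm _ ?_
  simpa [z] using norm_ind_le (⋃ A ∈ s, (A : Set Γ))

lemma map_eq_zero_of_mem_Ysub_of_subset
    (hker : ∀ x : Ysub 𝒜, (x : lp (fun _ : Γ => ℝ) ⊤) ∈ Zsub 𝒜 → T x = 0) (h𝒜' : 𝒜' ⊆ 𝒜)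
    (hT : ∀ A (hA : A ∈ 𝒜'), T ⟨ind A, ind_mem_Ysub (h𝒜' hA)⟩ = 0)
    (x : Ysub 𝒜) (hx : (x : lp (fun _ : Γ => ℝ) ⊤) ∈ Ysub 𝒜') : T x = 0 := by
  refine map_eq_zero_of_mem_topologicalClosure_span (Y := Ysub 𝒜)
    (Submodule.isClosed_topologicalClosure _) T (V := Ygen 𝒜')
    ((Ygen_mono h𝒜').trans Ygen_subset_Ysub) ?_ hx
  rintro ⟨_, hy⟩ ⟨n, A, hA, rfl⟩
  rcases iInter_eq_or_ind_iInter_mem_Zgen (fun i => h𝒜' (hA i)) with h | h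
  · rw [← hT (A 0) (hA 0)]
    exact congrArg T (Subtype.ext (congrArg ind h))
  · exact hker _ (Submodule.le_topologicalClosure _ (Submodule.subset_span h))

end Generators

theorem kernel_contains_Ysub_of_contains_Zsub_general {Γ : Type*} [Infinite Γ] (𝒜 : Set (Set Γ))
    (hcard : #Γ < #𝒜)
    (T : ↥(Ysub 𝒜) →L[ℝ] lp (fun _ : Γ => ℝ) ⊤)
    (hker : ∀ x : ↥(Ysub 𝒜), (x : lp (fun _ : Γ => ℝ) ⊤) ∈ Zsub 𝒜 → T x = 0) :
    ∃ 𝒜' ⊆ 𝒜, #𝒜' = #𝒜 ∧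
      ∀ x : ↥(Ysub 𝒜), (x : lp (fun _ : Γ => ℝ) ⊤) ∈ Ysub 𝒜' → T x = 0 := by
  set f : 𝒜 → lp (fun _ : Γ => ℝ) ⊤ := fun A => T ⟨ind A, ind_mem_Ysub A.2⟩
  have hf : #(support f) < #𝒜 :=
    (mk_support_le_of_norm_sum_le ENNReal.top_ne_zero f _
      (norm_sum_apply_ind_le T hker)).trans_lt hcard
  have : Infinite 𝒜 := Cardinal.infinite_iff.2 ((aleph0_le_mk Γ).trans hcard.le)
  have h𝒜' : Subtype.val '' (support f)ᶜ ⊆ 𝒜 := Subtype.coe_image_subset _ _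
  refine ⟨_, h𝒜', by rw [mk_image_eq Subtype.val_injective, mk_compl_of_infinite _ hf],
    map_eq_zero_of_mem_Ysub_of_subset T hker h𝒜' ?_⟩
  rintro _ ⟨A, hA, rfl⟩
  exact notMem_support.1 hA

theorem kernel_contains_Ysub_of_contains_Zsub {Γ : Type*} [Infinite Γ] (𝒜 : Set (Set Γ))
    (h𝒜 : AlmostDisjoint 𝒜) (hcard : #Γ < #𝒜)
    (T : ↥(Ysub 𝒜) →L[ℝ] lp (fun _ : Γ => ℝ) ⊤)
    (hker : ∀ x : ↥(Ysub 𝒜), (x : lp (fun _ : Γ => ℝ) ⊤) ∈ Zsub 𝒜 → T x = 0) :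
    ∃ 𝒜' ⊆ 𝒜, #𝒜' = #𝒜 ∧
      ∀ x : ↥(Ysub 𝒜), (x : lp (fun _ : Γ => ℝ) ⊤) ∈ Ysub 𝒜' → T x = 0 :=
  kernel_contains_Ysub_of_contains_Zsub_general 𝒜 hcard T hker
end

section
/- Let Γ be an infinite cardinal, A_1,...,A_m distinct members of an almost disjoint family 𝒜 ⊆ [Γ]^Γ, and σ_1,...,σ_m scalars. Then the norm of the coset of ∑_{j=1}^m σ_j 1_{A_j^d} in the quotient Y_𝒜 / Z_𝒜 equals max_j |σ_j|, where A_j^d = A_j \ ⋃_{k≠j} A_k. -/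
open Cardinal Set

theorem ind_apply {Γ : Type*} (A : Set Γ) (γ : Γ) : (ind A : ∀ _ : Γ, ℝ) γ = A.indicator 1 γ := rfl

theorem adf_small_biUnion {Γ : Type*} [Infinite Γ] {ι : Type*} (s : Finset ι) (f : ι → Set Γ)
    (h : ∀ i ∈ s, #(f i) < #Γ) : #(⋃ i ∈ s, f i) < #Γ := by
  classical
  induction s using Finset.induction with
  | empty => simpa using aleph0_le_mk Γ |>.trans_lt' (by simpa using aleph0_pos)
  | @insert a t ha ih =>
    rw [Finset.set_biUnion_insert]
    refine lt_of_le_of_lt (mk_union_le _ _) ?_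
    exact Cardinal.add_lt_of_lt (aleph0_le_mk Γ) (h a (Finset.mem_insert_self a t))
      (ih fun i hi => h i (Finset.mem_insert_of_mem hi))

theorem span_Zgen_small_support {Γ : Type*} [Infinite Γ] {𝒜 : Set (Set Γ)}
    (h𝒜 : AlmostDisjoint 𝒜) {z : lp (fun _ : Γ => ℝ) ⊤}
    (hz : z ∈ Submodule.span ℝ (Zgen 𝒜)) :
    ∃ S : Set Γ, #S < #Γ ∧ ∀ γ ∉ S, (z : ∀ _ : Γ, ℝ) γ = 0 := by
  induction hz using Submodule.span_induction with
  | mem y hy =>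
    obtain ⟨n, B, hB, hBinj, rfl⟩ := hy
    refine ⟨⋂ i, B i, ?_, ?_⟩
    · refine lt_of_le_of_lt (mk_le_mk_of_subset (t := B 0 ∩ B 1) ?_) ?_
      · exact fun γ hγ => ⟨mem_iInter.1 hγ 0, mem_iInter.1 hγ 1⟩
      · exact h𝒜.2 _ (hB 0) _ (hB 1) (fun h => by simpa using hBinj h)
    · intro γ hγ
      simp [ind_apply, Set.indicator_apply, hγ]
  | zero => exact ⟨∅, by simpa using aleph0_le_mk Γ |>.trans_lt' (by simpa using aleph0_pos),
      fun γ _ => rfl⟩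
  | add u v _ _ ihu ihv =>
    obtain ⟨S, hS, hSu⟩ := ihu
    obtain ⟨T, hT, hTv⟩ := ihv
    refine ⟨S ∪ T, lt_of_le_of_lt (mk_union_le _ _)
      (Cardinal.add_lt_of_lt (aleph0_le_mk Γ) hS hT), fun γ hγ => ?_⟩
    have : ((u + v : lp (fun _ : Γ => ℝ) ⊤) : ∀ _ : Γ, ℝ) γ = u γ + v γ := rfl
    rw [this, hSu γ (fun h => hγ (Or.inl h)), hTv γ (fun h => hγ (Or.inr h)), add_zero]
  | smul c u _ ihu =>
    obtain ⟨S, hS, hSu⟩ := ihu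
    refine ⟨S, hS, fun γ hγ => ?_⟩
    have : ((c • u : lp (fun _ : Γ => ℝ) ⊤) : ∀ _ : Γ, ℝ) γ = c * u γ := rfl
    rw [this, hSu γ hγ, mul_zero]

theorem quotient_norm_of_disjointified_sum {Γ : Type*} [Infinite Γ] (𝒜 : Set (Set Γ))
    (h𝒜 : AlmostDisjoint 𝒜) (m : ℕ) (hm : 0 < m) (A : Fin m → Set Γ) (hA : ∀ j, A j ∈ 𝒜)
    (hinj : Function.Injective A) (σ : Fin m → ℝ) :
    Metric.infDist
        (∑ j : Fin m, σ j • ind (A j \ ⋃ k ∈ ({j}ᶜ : Set (Fin m)), A k))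
        (Zsub 𝒜 : Set (lp (fun _ : Γ => ℝ) ⊤)) =
      Finset.univ.sup' ⟨⟨0, hm⟩, Finset.mem_univ _⟩ (fun j => |σ j|) := by
  classical
  set D : Fin m → Set Γ := fun j => A j \ ⋃ k ∈ ({j}ᶜ : Set (Fin m)), A k with hD
  set x : lp (fun _ : Γ => ℝ) ⊤ := ∑ j : Fin m, σ j • ind (D j) with hxdef
  set M := Finset.univ.sup' ⟨⟨0, hm⟩, Finset.mem_univ _⟩ (fun j => |σ j|) with hMdef
  have hM0 : 0 ≤ M := by
    rw [hMdef]
    exact le_trans (abs_nonneg (σ ⟨0, hm⟩))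
      (Finset.le_sup' (fun j => |σ j|) (Finset.mem_univ (⟨0, hm⟩ : Fin m)))
  have hmemD : ∀ γ (j : Fin m), γ ∈ D j ↔ γ ∈ A j ∧ ∀ k, k ≠ j → γ ∉ A k := by
    intro γ j
    simp only [hD, mem_diff, mem_iUnion, not_exists]
    constructor
    · rintro ⟨h1, h2⟩
      exact ⟨h1, fun k hk hγ => h2 k hk hγ⟩
    · rintro ⟨h1, h2⟩
      exact ⟨h1, fun k hk hγ => h2 k hk hγ⟩
  have hxapp : ∀ γ, (x : ∀ _ : Γ, ℝ) γ = ∑ j : Fin m, σ j * (D j).indicator 1 γ := by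
    intro γ
    rw [hxdef, lp.coeFn_sum, Finset.sum_apply]
    rfl
  have hval : ∀ γ (j₀ : Fin m), γ ∈ D j₀ → (x : ∀ _ : Γ, ℝ) γ = σ j₀ := by
    intro γ j₀ hγ
    rw [hxapp, Finset.sum_eq_single j₀]
    · simp [Set.indicator_of_mem hγ]
    · intro k _ hk
      have hγk : γ ∉ A k := ((hmemD γ j₀).1 hγ).2 k hk
      have : γ ∉ D k := fun h => hγk ((hmemD γ k).1 h).1
      simp [Set.indicator_of_notMem this]
    · simp
  have habs : ∀ γ, |(x : ∀ _ : Γ, ℝ) γ| ≤ M := by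
    intro γ
    by_cases h : ∃ j, γ ∈ D j
    · obtain ⟨j, hj⟩ := h
      rw [hval γ j hj, hMdef]
      exact Finset.le_sup' (fun j => |σ j|) (Finset.mem_univ j)
    · push_neg at h
      rw [hxapp, Finset.sum_eq_zero fun j _ => by simp [Set.indicator_of_notMem (h j)]]
      simpa using hM0
  have key : ∀ z' ∈ Submodule.span ℝ (Zgen 𝒜), M ≤ dist x z' := by
    intro z' hz'
    obtain ⟨S, hS, hSz⟩ := span_Zgen_small_support h𝒜 hz'
    obtain ⟨j₀, -, hj₀⟩ := Finset.exists_mem_eq_sup' ⟨⟨0, hm⟩, Finset.mem_univ _⟩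
      (fun j => |σ j|)
    set T : Set Γ := S ∪ ⋃ k ∈ Finset.univ.erase j₀, (A k ∩ A j₀) with hTdef
    have hT : #T < #Γ := by
      refine lt_of_le_of_lt (mk_union_le _ _) (Cardinal.add_lt_of_lt (aleph0_le_mk Γ) hS ?_)
      exact adf_small_biUnion _ _ fun k hk =>
        h𝒜.2 _ (hA k) _ (hA j₀) fun h => (Finset.mem_erase.1 hk).1 (hinj h)
    have hne : (A j₀ \ T).Nonempty := by
      rw [Set.nonempty_iff_ne_empty]
      intro h
      have hsub : A j₀ ⊆ T := by rwa [Set.diff_eq_empty] at h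
      exact absurd (mk_le_mk_of_subset hsub) (not_le.2 ((h𝒜.1 _ (hA j₀)) ▸ hT))
    obtain ⟨γ, hγA, hγT⟩ := hne
    have hγD : γ ∈ D j₀ := by
      rw [hmemD]
      refine ⟨hγA, fun k hk hγk => ?_⟩
      exact hγT (Or.inr (Set.mem_biUnion (Finset.mem_erase.2 ⟨hk, Finset.mem_univ k⟩)
        ⟨hγk, hγA⟩))
    have h1 : (x : ∀ _ : Γ, ℝ) γ = σ j₀ := hval γ j₀ hγD
    have h2 : (z' : ∀ _ : Γ, ℝ) γ = 0 := hSz γ fun h => hγT (Or.inl h)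
    calc M = |σ j₀| := by rw [hMdef]; exact hj₀
      _ = ‖((x - z' : lp (fun _ : Γ => ℝ) ⊤) : ∀ _ : Γ, ℝ) γ‖ := by
          have hc : ((x - z' : lp (fun _ : Γ => ℝ) ⊤) : ∀ _ : Γ, ℝ) γ
              = (x : ∀ _ : Γ, ℝ) γ - (z' : ∀ _ : Γ, ℝ) γ := rfl
          rw [hc, h1, h2, sub_zero, Real.norm_eq_abs]
      _ ≤ ‖x - z'‖ := lp.norm_apply_le_norm (by norm_num) _ γ
      _ = dist x z' := (dist_eq_norm _ _).symm
  refine le_antisymm ?_ ?_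
  · calc Metric.infDist x (Zsub 𝒜 : Set (lp (fun _ : Γ => ℝ) ⊤)) ≤ dist x 0 :=
        Metric.infDist_le_dist_of_mem (Submodule.zero_mem _)
      _ = ‖x‖ := dist_zero_right x
      _ ≤ M := lp.norm_le_of_forall_le hM0 fun γ => by
          simpa [Real.norm_eq_abs] using habs γ
  · by_contra hlt
    push_neg at hlt
    obtain ⟨z, hz, hdz⟩ := (Metric.infDist_lt_iff ⟨0, Submodule.zero_mem _⟩).1 hlt
    have hsub : (Zsub 𝒜 : Set (lp (fun _ : Γ => ℝ) ⊤)) ⊆ {z | M ≤ dist x z} := by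
      rw [Zsub, Submodule.topologicalClosure_coe]
      exact closure_minimal key (isClosed_le continuous_const
        (Continuous.dist continuous_const continuous_id))
    exact absurd hdz (not_lt.2 (hsub hz))
end

section
/- Let 𝒜 be an uncountable almost disjoint family of infinite subsets of ℕ and K_𝒜 the associated Mrówka space. Then the closed subspace of C_0(K_𝒜) spanned by the indicator functions {1_{{x_n}} : n ∈ ℕ} (which is isometric to c_0) is not the kernel of any bounded operator from C_0(K_𝒜) to ℓ_∞; in particular, it is not the kernel of any bounded operator on C_0(K_𝒜). -/
open Cardinal Set

/-- The underlying set of the Mrówka space associated with an almost disjoint family `𝒜`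
of subsets of `ℕ`: the isolated points `x_n` are `Sum.inl n` and the points `y_A` are
`Sum.inr A`. -/
def Mrowka (𝒜 : Set (Set ℕ)) : Type := ℕ ⊕ ↥𝒜

/-- The basic neighbourhood `U(A, F) = {x_n : n ∈ A \ F} ∪ {y_A}` of the point `y_A`. -/
def mrowkaNbhd {𝒜 : Set (Set ℕ)} (A : ↥𝒜) (F : Finset ℕ) : Set (Mrowka 𝒜) :=
  (Sum.inl '' ((A : Set ℕ) \ (F : Set ℕ))) ∪ {Sum.inr A}

/-- The Mrówka topology: points `x_n` are isolated and the sets `U(A, F)` form a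
neighbourhood basis at `y_A`. -/
instance (𝒜 : Set (Set ℕ)) : TopologicalSpace (Mrowka 𝒜) :=
  TopologicalSpace.generateFrom
    ({s | ∃ n : ℕ, s = {Sum.inl n}} ∪ {s | ∃ (A : ↥𝒜) (F : Finset ℕ), s = mrowkaNbhd A F})

/-- An almost disjoint family of infinite subsets of `ℕ`. -/
def ADFamily (𝒜 : Set (Set ℕ)) : Prop :=
  (∀ A ∈ 𝒜, A.Infinite) ∧ ∀ A ∈ 𝒜, ∀ B ∈ 𝒜, A ≠ B → (A ∩ B).Finite

open ZeroAtInfty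

/-- The closed subspace of $C_0(K_𝒜)$ spanned by the indicator functions of the isolated
points $x_n$. -/
noncomputable def isolatedSpan (𝒜 : Set (Set ℕ)) : Submodule ℝ C₀(Mrowka 𝒜, ℝ) :=
  (Submodule.span ℝ {f : C₀(Mrowka 𝒜, ℝ) |
    ∃ n : ℕ, ⇑f = Set.indicator {Sum.inl n} (1 : Mrowka 𝒜 → ℝ)}).topologicalClosure

/-! An almost disjoint family lets finitely many neighbourhoods `U(A, ∅)` be shrunk to pairwise
disjoint `U(A, F_A)`, and `1_{U(A, ∅)} - 1_{U(A, F_A)}` is a finite sum of indicators `1_{x_n}`.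
Testing a functional `φ` that vanishes on `isolatedSpan` against `∑ sign(φ 1_{U(A, ∅)}) 1_{U(A, F_A)}`,
a function of norm at most one, gives `∑_{A ∈ s} |φ 1_{U(A, ∅)}| ≤ ‖φ‖` for every finite `s`, so
`φ 1_{U(A, ∅)} ≠ 0` for only countably many `A`. The kernel of an operator into `ℓ∞`, and, since the
`x_n` are dense, that of an operator `S` on `C₀(K_𝒜)`, is the common kernel of countably many
functionals (`f ↦ (T f)_k`, resp. `f ↦ (S f)(x_k)`). For uncountable `𝒜` it therefore contains some
`1_{U(A, ∅)}`, which is not in `isolatedSpan` because every element of `isolatedSpan` vanishes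
at `y_A`. -/

lemma Function.countable_support_of_sum_abs_le {ι : Type*} {f : ι → ℝ} {C : ℝ}
    (h : ∀ s : Finset ι, ∑ i ∈ s, |f i| ≤ C) : (Function.support f).Countable :=
  (summable_of_sum_le (fun i => abs_nonneg (f i)) h).countable_support.mono fun _ hi =>
    abs_ne_zero.2 hi

lemma abs_sum_mul_indicator_le_one {ι α : Type*} {s : Finset ι} {t : ι → Set α}
    (ht : (s : Set ι).PairwiseDisjoint t) {c : ι → ℝ} (hc : ∀ i, |c i| ≤ 1) (a : α) :
    |∑ i ∈ s, c i * (t i).indicator 1 a| ≤ 1 :=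
  calc |∑ i ∈ s, c i * (t i).indicator 1 a|
      ≤ ∑ i ∈ s, (t i).indicator 1 a := by
        refine (Finset.abs_sum_le_sum_abs _ _).trans (Finset.sum_le_sum fun i _ => ?_)
        have h0 : 0 ≤ (t i).indicator (1 : α → ℝ) a :=
          Set.indicator_nonneg (fun _ _ => zero_le_one) a
        rw [abs_mul, abs_of_nonneg h0]
        exact mul_le_of_le_one_left h0 (hc i)
    _ = (⋃ i ∈ s, t i).indicator 1 a := (Finset.indicator_biUnion_apply s t ht a).symm
    _ ≤ 1 := Set.indicator_le_self' (fun _ _ => zero_le_one) a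

lemma abs_sign_le_one {α : Type*} [Ring α] [LinearOrder α] [IsOrderedRing α] (a : α) :
    |(SignType.sign a : α)| ≤ 1 := by
  rcases SignType.sign a with _ | _ | _ <;> simp

open Filter Topology

namespace ZeroAtInftyContinuousMap

variable {X E : Type*} [TopologicalSpace X] [NormedAddCommGroup E]

lemma norm_apply_le_norm (f : C₀(X, E)) (x : X) : ‖f x‖ ≤ ‖f‖ := by
  rw [← norm_toBCF_eq_norm]
  exact f.toBCF.norm_coe_le_norm x

lemma norm_le_iff {f : C₀(X, E)} {C : ℝ} (hC : 0 ≤ C) : ‖f‖ ≤ C ↔ ∀ x, ‖f x‖ ≤ C := by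
  rw [← norm_toBCF_eq_norm]
  exact BoundedContinuousFunction.norm_le hC

@[simp] lemma sum_apply {ι : Type*} (s : Finset ι) (f : ι → C₀(X, E)) (x : X) :
    (∑ i ∈ s, f i) x = ∑ i ∈ s, f i x :=
  map_sum (⟨⟨fun g : C₀(X, E) => g x, rfl⟩, fun _ _ => rfl⟩ : C₀(X, E) →+ E) f s

variable (𝕜 : Type*) [NormedField 𝕜] [NormedSpace 𝕜 E]

noncomputable def evalCLM (x : X) : C₀(X, E) →L[𝕜] E :=
  LinearMap.mkContinuous
    { toFun := fun f => f x
      map_add' := fun _ _ => rfl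
      map_smul' := fun _ _ => rfl }
    1 fun f => (one_mul ‖f‖).symm ▸ norm_apply_le_norm f x

@[simp] lemma evalCLM_apply (x : X) (f : C₀(X, E)) : evalCLM 𝕜 x f = f x := rfl

noncomputable def indicator (U : Set X) (hU : IsClopen U) (hc : IsCompact U) : C₀(X, ℝ) where
  toFun := U.indicator 1
  continuous_toFun := hU.continuous_indicator continuous_const
  zero_at_infty' := tendsto_nhds_of_eventually_eq <|
    Filter.mem_of_superset hc.compl_mem_cocompact fun _ hx => Set.indicator_of_notMem hx _

@[simp] lemma coe_indicator (U : Set X) (hU : IsClopen U) (hc : IsCompact U) :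
    ⇑(indicator U hU hc) = U.indicator 1 := rfl

end ZeroAtInftyContinuousMap

namespace Mrowka

variable {𝒜 : Set (Set ℕ)}

def x (n : ℕ) : Mrowka 𝒜 := Sum.inl n

def y (A : ↥𝒜) : Mrowka 𝒜 := Sum.inr A

@[elab_as_elim, induction_eliminator]
lemma induction {motive : Mrowka 𝒜 → Prop} (x : ∀ n, motive (x n)) (y : ∀ A, motive (y A))
    (z : Mrowka 𝒜) : motive z :=
  Sum.rec x y z

@[simp] lemma x_inj {m n : ℕ} : (x m : Mrowka 𝒜) = x n ↔ m = n := Sum.inl_injective.eq_iff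

@[simp] lemma y_inj {A B : ↥𝒜} : y A = y B ↔ A = B := Sum.inr_injective.eq_iff

@[simp] lemma x_ne_y (n : ℕ) (A : ↥𝒜) : x n ≠ y A := Sum.inl_ne_inr

@[simp] lemma y_ne_x (n : ℕ) (A : ↥𝒜) : y A ≠ x n := Sum.inr_ne_inl

@[simp] lemma x_mem_mrowkaNbhd {A : ↥𝒜} {F : Finset ℕ} {n : ℕ} :
    x n ∈ mrowkaNbhd A F ↔ n ∈ (A : Set ℕ) ∧ n ∉ F := by
  change (Sum.inl n : ℕ ⊕ ↥𝒜) ∈ Sum.inl '' _ ∪ {Sum.inr A} ↔ _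
  simp

@[simp] lemma y_mem_mrowkaNbhd {A B : ↥𝒜} {F : Finset ℕ} : y B ∈ mrowkaNbhd A F ↔ B = A := by
  change (Sum.inr B : ℕ ⊕ ↥𝒜) ∈ Sum.inl '' _ ∪ {Sum.inr A} ↔ _
  simp

lemma isTopologicalBasis : TopologicalSpace.IsTopologicalBasis
    ({s | ∃ n : ℕ, s = {x n}} ∪ {s | ∃ (A : ↥𝒜) (F : Finset ℕ), s = mrowkaNbhd A F} :
      Set (Set (Mrowka 𝒜))) := by
  refine ⟨?_, ?_, rfl⟩
  · rintro t₁ ht₁ t₂ ht₂ z hz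
    induction z with
    | x n => exact ⟨{x n}, Or.inl ⟨n, rfl⟩, rfl, Set.singleton_subset_iff.2 hz⟩
    | y B =>
      obtain ⟨⟨n, rfl⟩ | ⟨A, F, rfl⟩, ⟨m, rfl⟩ | ⟨A', G, rfl⟩⟩ := And.intro ht₁ ht₂ <;>
        simp only [Set.mem_inter_iff, Set.mem_singleton_iff, y_mem_mrowkaNbhd, y_ne_x,
          false_and, and_false] at hz
      obtain ⟨rfl, rfl⟩ := hz
      refine ⟨mrowkaNbhd B (F ∪ G), Or.inr ⟨B, F ∪ G, rfl⟩, by simp, fun z hz => ?_⟩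
      induction z <;> simp_all
  · refine Set.eq_univ_of_forall fun z => ?_
    induction z with
    | x n => exact ⟨{x n}, Or.inl ⟨n, rfl⟩, rfl⟩
    | y A => exact ⟨mrowkaNbhd A ∅, Or.inr ⟨A, ∅, rfl⟩, by simp⟩

lemma isOpen_singleton_x (n : ℕ) : IsOpen ({x n} : Set (Mrowka 𝒜)) :=
  TopologicalSpace.isOpen_generateFrom_of_mem (Or.inl ⟨n, rfl⟩)

lemma isOpen_mrowkaNbhd (A : ↥𝒜) (F : Finset ℕ) : IsOpen (mrowkaNbhd A F) :=
  TopologicalSpace.isOpen_generateFrom_of_mem (Or.inr ⟨A, F, rfl⟩)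

lemma nhds_x (n : ℕ) : 𝓝 (x n : Mrowka 𝒜) = pure (x n) :=
  (isOpen_singleton_iff_nhds_eq_pure _).1 (isOpen_singleton_x n)

lemma hasBasis_nhds_y (A : ↥𝒜) : (𝓝 (y A)).HasBasis (fun _ : Finset ℕ => True) (mrowkaNbhd A) := by
  refine isTopologicalBasis.nhds_hasBasis.to_hasBasis ?_ fun F _ =>
    ⟨mrowkaNbhd A F, ⟨Or.inr ⟨A, F, rfl⟩, by simp⟩, subset_rfl⟩
  rintro _ ⟨⟨n, rfl⟩ | ⟨B, F, rfl⟩, hA⟩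
  · simp at hA
  · obtain rfl := y_mem_mrowkaNbhd.1 hA
    exact ⟨F, trivial, subset_rfl⟩

lemma disjoint_mrowkaNbhd {A B : ↥𝒜} (hAB : A ≠ B) {F : Finset ℕ}
    (hF : (A : Set ℕ) ∩ B ⊆ F) (G : Finset ℕ) : Disjoint (mrowkaNbhd A F) (mrowkaNbhd B G) := by
  refine Set.disjoint_left.2 fun z h₁ h₂ => ?_
  induction z with
  | x n =>
    rw [x_mem_mrowkaNbhd] at h₁ h₂
    exact h₁.2 (hF ⟨h₁.1, h₂.1⟩)
  | y C =>
    rw [y_mem_mrowkaNbhd] at h₁ h₂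
    exact hAB (h₁ ▸ h₂)

lemma isClosed_singleton_x (n : ℕ) : IsClosed ({x n} : Set (Mrowka 𝒜)) := by
  refine isOpen_compl_iff.1 (isOpen_iff_mem_nhds.2 fun z hz => ?_)
  induction z with
  | x m => exact nhds_x m ▸ Filter.mem_pure.2 hz
  | y B =>
    refine (hasBasis_nhds_y B).mem_iff.2 ⟨{n}, trivial, fun z hz => ?_⟩
    induction z <;> simp_all

lemma isClosed_mrowkaNbhd (had : ADFamily 𝒜) (A : ↥𝒜) (F : Finset ℕ) :
    IsClosed (mrowkaNbhd A F) := by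
  refine isOpen_compl_iff.1 (isOpen_iff_mem_nhds.2 fun z hz => ?_)
  induction z with
  | x m => exact nhds_x m ▸ Filter.mem_pure.2 hz
  | y B =>
    have hBA : B ≠ A := fun h => hz (by simp [h])
    have hfin := had.2 B B.2 A A.2 (Subtype.coe_injective.ne hBA)
    exact (hasBasis_nhds_y B).mem_iff.2 ⟨hfin.toFinset, trivial,
      (disjoint_mrowkaNbhd hBA (by simp) F).subset_compl_right⟩

lemma tendsto_x_nhds_y (A : ↥𝒜) {s : Set ℕ} (hs : s ⊆ A) :
    Tendsto (fun n : s => (x n : Mrowka 𝒜)) cofinite (𝓝 (y A)) := by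
  refine (hasBasis_nhds_y A).tendsto_right_iff.2 fun F _ => Filter.eventually_cofinite.2 ?_
  refine (F.finite_toSet.preimage Subtype.val_injective.injOn).subset fun n hn => ?_
  simpa [hs n.2] using hn

lemma isCompact_mrowkaNbhd (A : ↥𝒜) (F : Finset ℕ) : IsCompact (mrowkaNbhd A F) := by
  have : mrowkaNbhd A F = insert (y A) (Set.range fun n : ↥((A : Set ℕ) \ F) => x n) := by
    ext z
    induction z <;> simp [eq_comm]
  exact this ▸ (tendsto_x_nhds_y A Set.sdiff_subset).isCompact_insert_range_of_cofinite

lemma denseRange_x (had : ADFamily 𝒜) : DenseRange (x : ℕ → Mrowka 𝒜) := by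
  intro z
  induction z with
  | x n => exact subset_closure ⟨n, rfl⟩
  | y A =>
    have := (had.1 A A.2).to_subtype
    exact mem_closure_of_tendsto (tendsto_x_nhds_y A subset_rfl)
      (Eventually.of_forall fun n => ⟨n, rfl⟩)

noncomputable def pointIndicator (n : ℕ) : C₀(Mrowka 𝒜, ℝ) :=
  ZeroAtInftyContinuousMap.indicator {x n} ⟨isClosed_singleton_x n, isOpen_singleton_x n⟩
    isCompact_singleton

noncomputable def nbhdIndicator (had : ADFamily 𝒜) (A : ↥𝒜) (F : Finset ℕ) : C₀(Mrowka 𝒜, ℝ) :=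
  ZeroAtInftyContinuousMap.indicator (mrowkaNbhd A F)
    ⟨isClosed_mrowkaNbhd had A F, isOpen_mrowkaNbhd A F⟩ (isCompact_mrowkaNbhd A F)

@[simp] lemma pointIndicator_apply (n : ℕ) (z : Mrowka 𝒜) :
    pointIndicator n z = ({x n} : Set (Mrowka 𝒜)).indicator 1 z := rfl

@[simp] lemma nbhdIndicator_apply (had : ADFamily 𝒜) (A : ↥𝒜) (F : Finset ℕ) (z : Mrowka 𝒜) :
    nbhdIndicator had A F z = (mrowkaNbhd A F).indicator 1 z := rfl

lemma pointIndicator_mem_isolatedSpan (n : ℕ) : pointIndicator n ∈ isolatedSpan 𝒜 :=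
  Submodule.le_topologicalClosure _ (Submodule.subset_span ⟨n, rfl⟩)

open Classical in
lemma nbhdIndicator_empty_sub_nbhdIndicator (had : ADFamily 𝒜) (A : ↥𝒜) (F : Finset ℕ) :
    nbhdIndicator had A ∅ - nbhdIndicator had A F =
      ∑ n ∈ F with n ∈ (A : Set ℕ), pointIndicator n := by
  ext z
  induction z with
  | x n => by_cases n ∈ (A : Set ℕ) <;> by_cases n ∈ F <;> simp [*, Set.indicator_apply]
  | y B => simp [Set.indicator_apply]

lemma nbhdIndicator_empty_sub_mem_isolatedSpan (had : ADFamily 𝒜) (A : ↥𝒜) (F : Finset ℕ) :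
    nbhdIndicator had A ∅ - nbhdIndicator had A F ∈ isolatedSpan 𝒜 := by
  classical
  rw [nbhdIndicator_empty_sub_nbhdIndicator]
  exact Submodule.sum_mem _ fun n _ => pointIndicator_mem_isolatedSpan n

lemma apply_y_eq_zero_of_mem_isolatedSpan {f : C₀(Mrowka 𝒜, ℝ)} (hf : f ∈ isolatedSpan 𝒜)
    (A : ↥𝒜) : f (y A) = 0 := by
  have : isolatedSpan 𝒜 ≤ LinearMap.ker
      (ZeroAtInftyContinuousMap.evalCLM ℝ (E := ℝ) (y A) : C₀(Mrowka 𝒜, ℝ) →ₗ[ℝ] ℝ) := by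
    refine Submodule.topologicalClosure_minimal _ (Submodule.span_le.2 ?_)
      (ContinuousLinearMap.isClosed_ker _)
    rintro g ⟨n, hg⟩
    simp only [SetLike.mem_coe, LinearMap.mem_ker, ContinuousLinearMap.coe_coe,
      ZeroAtInftyContinuousMap.evalCLM_apply, hg]
    exact Set.indicator_of_notMem (s := {x n}) (y_ne_x n A) (1 : Mrowka 𝒜 → ℝ)
  exact this hf

lemma nbhdIndicator_notMem_isolatedSpan (had : ADFamily 𝒜) (A : ↥𝒜) (F : Finset ℕ) :
    nbhdIndicator had A F ∉ isolatedSpan 𝒜 := fun h => by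
  simpa using apply_y_eq_zero_of_mem_isolatedSpan h A

lemma exists_pairwiseDisjoint_mrowkaNbhd (had : ADFamily 𝒜) (s : Finset ↥𝒜) :
    ∃ F : ↥𝒜 → Finset ℕ, (s : Set ↥𝒜).PairwiseDisjoint fun A => mrowkaNbhd A (F A) := by
  have hfin (A : ↥𝒜) : (⋃ B ∈ s.erase A, (A : Set ℕ) ∩ B).Finite :=
    (s.erase A).finite_toSet.biUnion fun B hB =>
      had.2 A A.2 B B.2 (Subtype.coe_injective.ne (Finset.ne_of_mem_erase hB).symm)
  refine ⟨fun A => (hfin A).toFinset, fun A _ B hB hAB => disjoint_mrowkaNbhd hAB ?_ _⟩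
  rw [Set.Finite.coe_toFinset]
  exact Set.subset_iUnion₂ (s := fun B (_ : B ∈ s.erase A) => (A : Set ℕ) ∩ B) B
    (by simpa [hAB.symm] using hB)

lemma sum_abs_le_opNorm (had : ADFamily 𝒜) (φ : C₀(Mrowka 𝒜, ℝ) →L[ℝ] ℝ)
    (hφ : ∀ f ∈ isolatedSpan 𝒜, φ f = 0) (s : Finset ↥𝒜) :
    ∑ A ∈ s, |φ (nbhdIndicator had A ∅)| ≤ ‖φ‖ := by
  obtain ⟨F, hF⟩ := exists_pairwiseDisjoint_mrowkaNbhd had s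
  have hφF (A : ↥𝒜) : φ (nbhdIndicator had A (F A)) = φ (nbhdIndicator had A ∅) := by
    have := hφ _ (nbhdIndicator_empty_sub_mem_isolatedSpan had A (F A))
    rw [map_sub, sub_eq_zero] at this
    exact this.symm
  set c : ↥𝒜 → ℝ := fun A => SignType.sign (φ (nbhdIndicator had A ∅))
  set g := ∑ A ∈ s, c A • nbhdIndicator had A (F A)
  have hg : ‖g‖ ≤ 1 := (ZeroAtInftyContinuousMap.norm_le_iff zero_le_one).2 fun z => by
    simpa [g] using abs_sum_mul_indicator_le_one hF (fun A => abs_sign_le_one _) z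
  calc ∑ A ∈ s, |φ (nbhdIndicator had A ∅)| = φ g := by simp [g, c, hφF]
    _ ≤ ‖φ‖ * ‖g‖ := (le_abs_self _).trans (φ.le_opNorm g)
    _ ≤ ‖φ‖ := mul_le_of_le_one_right (norm_nonneg φ) hg

lemma exists_forall_apply_nbhdIndicator_eq_zero (had : ADFamily 𝒜) (hunc : ¬𝒜.Countable)
    (φ : ℕ → C₀(Mrowka 𝒜, ℝ) →L[ℝ] ℝ) (hφ : ∀ k, ∀ f ∈ isolatedSpan 𝒜, φ k f = 0) :
    ∃ A : ↥𝒜, ∀ k, φ k (nbhdIndicator had A ∅) = 0 := by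
  have hcount : (⋃ k, Function.support fun A => φ k (nbhdIndicator had A ∅)).Countable :=
    Set.countable_iUnion fun k =>
      Function.countable_support_of_sum_abs_le (sum_abs_le_opNorm had (φ k) (hφ k))
  by_contra! h
  refine hunc (Set.countable_coe_iff.1 (Set.countable_univ_iff.1 (hcount.mono fun A _ => ?_)))
  exact Set.mem_iUnion.2 (h A)

lemma ne_isolatedSpan_of_forall_mem_iff (had : ADFamily 𝒜) (hunc : ¬𝒜.Countable)
    {p : Submodule ℝ C₀(Mrowka 𝒜, ℝ)} (φ : ℕ → C₀(Mrowka 𝒜, ℝ) →L[ℝ] ℝ)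
    (hp : ∀ f, f ∈ p ↔ ∀ k, φ k f = 0) : p ≠ isolatedSpan 𝒜 := by
  rintro rfl
  obtain ⟨A, hA⟩ := exists_forall_apply_nbhdIndicator_eq_zero had hunc φ
    fun k f hf => (hp f).1 hf k
  exact nbhdIndicator_notMem_isolatedSpan had A ∅ ((hp _).2 hA)

lemma eq_zero_iff_forall_apply_x (had : ADFamily 𝒜) {f : C₀(Mrowka 𝒜, ℝ)} :
    f = 0 ↔ ∀ n, f (x n) = 0 :=
  ⟨fun hf n => by simp [hf], fun h =>
    DFunLike.coe_injective ((denseRange_x had).equalizer f.continuous continuous_zero (funext h))⟩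

end Mrowka

theorem isolatedSpan_not_a_kernel (𝒜 : Set (Set ℕ)) (had : ADFamily 𝒜)
    (hunc : ¬𝒜.Countable) :
    (∀ T : C₀(Mrowka 𝒜, ℝ) →L[ℝ] lp (fun _ : ℕ => ℝ) ⊤,
      LinearMap.ker (T : C₀(Mrowka 𝒜, ℝ) →ₗ[ℝ] lp (fun _ : ℕ => ℝ) ⊤) ≠ isolatedSpan 𝒜) ∧
    ∀ S : C₀(Mrowka 𝒜, ℝ) →L[ℝ] C₀(Mrowka 𝒜, ℝ),
      LinearMap.ker (S : C₀(Mrowka 𝒜, ℝ) →ₗ[ℝ] C₀(Mrowka 𝒜, ℝ)) ≠ isolatedSpan 𝒜 := by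
  refine ⟨fun T => Mrowka.ne_isolatedSpan_of_forall_mem_iff had hunc
      (fun k => (lp.evalCLM ℝ _ ⊤ k).comp T) fun f => ?_,
    fun S => Mrowka.ne_isolatedSpan_of_forall_mem_iff had hunc
      (fun k => (ZeroAtInftyContinuousMap.evalCLM ℝ (Mrowka.x k)).comp S) fun f => ?_⟩
  · rw [LinearMap.mem_ker, ContinuousLinearMap.coe_coe]
    exact ⟨fun h k => by rw [ContinuousLinearMap.comp_apply, h, map_zero],
      fun h => lp.ext (funext h)⟩
  · simp [Mrowka.eq_zero_iff_forall_apply_x had]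
end
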